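/- Let ψ be the Lévy–Khintchine characteristic exponent associated with drift μ ∈ ℝ, volatility σ ≥ 0, and jump measure ν, and assume in addition that ∫_{|x|>1} |x|^ε ν(dx) < ∞ for some ε ∈ (0, 1). Then for every q > 0 the function g(ω) = q/(q − ψ(ω)) satisfies a global Hölder condition on ℝ: there exist a constant C > 0 and an exponent γ ∈ (0, 1] such that |g(ω₁) − g(ω₂)| ≤ C|ω₁ − ω₂|^γ for all ω₁, ω₂ ∈ ℝ. -/

import Mathlib

open MeasureTheory Complex Real

/-- The Lévy–Khintchine characteristic exponent with drift `μ`, volatility `σ`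
and jump measure `ν`. -/
noncomputable def levyExponent (μdrift σ : ℝ) (ν : Measure ℝ) (ω : ℝ) : ℂ :=
  Complex.I * (μdrift : ℂ) * (ω : ℂ) - (1 / 2 : ℂ) * (σ : ℂ) ^ 2 * (ω : ℂ) ^ 2 +
    ∫ x : ℝ, (Complex.exp (Complex.I * ω * x) - 1 -
      (Set.Icc (-1 : ℝ) 1).indicator (fun t : ℝ => Complex.I * (ω : ℂ) * (t : ℂ)) x) ∂ν

/-! ### Auxiliary elementary estimates -/

lemma sqnorm_exp_I_sub_one (θ : ℝ) :
    ‖Complex.exp (Complex.I * θ) - 1‖ ^ 2 = 2 * (1 - Real.cos θ) := by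
  rw [mul_comm Complex.I]
  rw [Complex.sq_norm, Complex.normSq_apply]
  simp [Complex.exp_ofReal_mul_I_re, Complex.exp_ofReal_mul_I_im]
  nlinarith [Real.sin_sq_add_cos_sq θ]

lemma norm_exp_I_sub_one_le_two (θ : ℝ) : ‖Complex.exp (Complex.I * θ) - 1‖ ≤ 2 := by
  calc ‖Complex.exp (Complex.I * θ) - 1‖ ≤ ‖Complex.exp (Complex.I * θ)‖ + ‖(1:ℂ)‖ :=
        norm_sub_le _ _
    _ ≤ 2 := by
        rw [mul_comm Complex.I, Complex.norm_exp_ofReal_mul_I]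
        norm_num

lemma one_sub_cos_nonneg (θ : ℝ) : 0 ≤ 1 - Real.cos θ := by
  simpa using Real.cos_le_one θ

lemma norm_exp_I_sub_one_le_abs (θ : ℝ) : ‖Complex.exp (Complex.I * θ) - 1‖ ≤ |θ| := by
  have h1 : ‖Complex.exp (Complex.I * θ) - 1‖ ^ 2 ≤ |θ| ^ 2 := by
    rw [sqnorm_exp_I_sub_one, _root_.sq_abs]
    nlinarith [Real.one_sub_sq_div_two_le_cos (x := θ)]
  exact (pow_le_pow_iff_left₀ (norm_nonneg _) (abs_nonneg _) two_ne_zero).mp h1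

lemma norm_exp_I_sub_one_sub_le (θ : ℝ) :
    ‖Complex.exp (Complex.I * θ) - 1 - Complex.I * θ‖ ≤ 3 * θ ^ 2 := by
  rcases le_or_gt |θ| 1 with h | h
  · have := Complex.norm_exp_sub_one_sub_id_le (x := Complex.I * θ) (by
      rwa [norm_mul, Complex.norm_I, one_mul, Complex.norm_real, Real.norm_eq_abs])
    calc ‖Complex.exp (Complex.I * θ) - 1 - Complex.I * θ‖
        ≤ ‖Complex.I * θ‖ ^ 2 := this
      _ = θ ^ 2 := by rw [norm_mul, Complex.norm_I, one_mul, Complex.norm_real, Real.norm_eq_abs, _root_.sq_abs]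
      _ ≤ 3 * θ ^ 2 := by nlinarith
  · have h2 : ‖Complex.exp (Complex.I * θ) - 1 - Complex.I * θ‖ ≤ 2 + |θ| := by
      calc ‖Complex.exp (Complex.I * θ) - 1 - Complex.I * θ‖
          ≤ ‖Complex.exp (Complex.I * θ) - 1‖ + ‖Complex.I * θ‖ := norm_sub_le _ _
        _ ≤ 2 + |θ| := by
            refine add_le_add (norm_exp_I_sub_one_le_two θ) ?_
            simp
    nlinarith [abs_nonneg θ, _root_.sq_abs θ]

lemma self_le_rpow_of_le_one {t ε : ℝ} (ht : 0 ≤ t) (ht1 : t ≤ 1) (hε0 : 0 < ε) (hε1 : ε ≤ 1) :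
    t ≤ t ^ ε := by
  simpa using Real.rpow_le_rpow_of_exponent_ge' ht ht1 hε0.le hε1

/-! ### The integrand of the Lévy exponent -/

/-- The integrand appearing in `levyExponent`. -/
noncomputable def levyInt (ω x : ℝ) : ℂ :=
  Complex.exp (Complex.I * ω * x) - 1 -
    (Set.Icc (-1 : ℝ) 1).indicator (fun t : ℝ => Complex.I * (ω : ℂ) * (t : ℂ)) x

lemma levyExponent_eq (μdrift σ : ℝ) (ν : Measure ℝ) (ω : ℝ) :
    levyExponent μdrift σ ν ω =
      Complex.I * (μdrift : ℂ) * (ω : ℂ) - (1 / 2 : ℂ) * (σ : ℂ) ^ 2 * (ω : ℂ) ^ 2 +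
        ∫ x : ℝ, levyInt ω x ∂ν := rfl

lemma levyInt_cast (ω x : ℝ) : Complex.I * (ω : ℂ) * (x : ℂ) = Complex.I * ((ω * x : ℝ) : ℂ) := by
  push_cast; ring

lemma levyInt_measurable (ω : ℝ) : Measurable (levyInt ω) := by
  unfold levyInt
  refine Measurable.sub (Measurable.sub ?_ measurable_const) ?_
  · exact (Complex.continuous_exp.comp (by continuity)).measurable
  · exact Measurable.indicator (by fun_prop) measurableSet_Icc

lemma sq_le_one_of_mem {x : ℝ} (hx : x ∈ Set.Icc (-1 : ℝ) 1) : x ^ 2 ≤ 1 := by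
  rcases hx with ⟨h1, h2⟩; nlinarith

lemma levyInt_norm_le (ω x : ℝ) : ‖levyInt ω x‖ ≤ (3 * ω ^ 2 + 2) * min 1 (x ^ 2) := by
  unfold levyInt
  by_cases hx : x ∈ Set.Icc (-1 : ℝ) 1
  · rw [Set.indicator_of_mem hx, levyInt_cast]
    have h1 := norm_exp_I_sub_one_sub_le (ω * x)
    have h2 : min 1 (x ^ 2) = x ^ 2 := min_eq_right (sq_le_one_of_mem hx)
    rw [h2]
    calc ‖Complex.exp (Complex.I * ((ω * x : ℝ) : ℂ)) - 1 - Complex.I * ((ω * x : ℝ) : ℂ)‖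
        ≤ 3 * (ω * x) ^ 2 := h1
      _ ≤ (3 * ω ^ 2 + 2) * x ^ 2 := by nlinarith [sq_nonneg x, sq_nonneg (ω * x)]
  · rw [Set.indicator_of_notMem hx, sub_zero, levyInt_cast]
    have h2 : min 1 (x ^ 2) = 1 := by
      apply min_eq_left
      rw [Set.mem_Icc, not_and_or, not_le, not_le] at hx
      rcases hx with h | h <;> nlinarith
    rw [h2, mul_one]
    calc ‖Complex.exp (Complex.I * ((ω * x : ℝ) : ℂ)) - 1‖ ≤ 2 := norm_exp_I_sub_one_le_two _
      _ ≤ 3 * ω ^ 2 + 2 := by nlinarith [sq_nonneg ω]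

lemma one_sub_cos_le (ω x : ℝ) :
    1 - Real.cos (ω * x) ≤ (ω ^ 2 / 2 + 2) * min 1 (x ^ 2) := by
  rcases le_or_gt (x ^ 2) 1 with h | h
  · rw [min_eq_right h]
    have := Real.one_sub_sq_div_two_le_cos (x := ω * x)
    nlinarith [sq_nonneg ω, sq_nonneg x, sq_nonneg (ω * x)]
  · rw [min_eq_left h.le]
    have h1 : -1 ≤ Real.cos (ω * x) := Real.neg_one_le_cos _
    nlinarith [sq_nonneg ω]

lemma levyInt_re (ω x : ℝ) : (levyInt ω x).re = Real.cos (ω * x) - 1 := by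
  unfold levyInt
  rw [levyInt_cast, mul_comm Complex.I]
  have hre : ((Set.Icc (-1 : ℝ) 1).indicator (fun t : ℝ => Complex.I * (ω : ℂ) * (t : ℂ)) x).re
      = 0 := by
    by_cases hx : x ∈ Set.Icc (-1 : ℝ) 1
    · rw [Set.indicator_of_mem hx]; simp
    · rw [Set.indicator_of_notMem hx]; simp
  rw [Complex.sub_re, Complex.sub_re, hre, Complex.exp_ofReal_mul_I_re]
  simp

/-- Key pointwise estimate for the difference of integrands. -/
lemma levyInt_diff_norm_le {ε : ℝ} (hε0 : 0 < ε) (hε1 : ε ≤ 1) (ω₁ ω₂ x : ℝ)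
    (hδ : |ω₁ - ω₂| ≤ 1) :
    ‖levyInt ω₁ x - levyInt ω₂ x‖ ≤
      2 * |ω₁ - ω₂| * (min 1 (x ^ 2) + (1 - Real.cos (ω₂ * x))) +
      2 * |ω₁ - ω₂| ^ ε * Set.indicator {y : ℝ | 1 < |y|} (fun y => |y| ^ ε) x := by
  have hind0 : ∀ z : ℝ, 0 ≤ Set.indicator {y : ℝ | 1 < |y|} (fun y => |y| ^ ε) z := by
    intro z
    apply Set.indicator_nonneg
    intro y _
    positivity
  have hc0 : 0 ≤ 1 - Real.cos (ω₂ * x) := one_sub_cos_nonneg _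
  have hmin0 : 0 ≤ min 1 (x ^ 2) := le_min zero_le_one (sq_nonneg x)
  by_cases hx : x ∈ Set.Icc (-1 : ℝ) 1
  · have hx1 : |x| ≤ 1 := abs_le.mpr ⟨hx.1, hx.2⟩
    have hid : levyInt ω₁ x - levyInt ω₂ x =
        Complex.exp (Complex.I * ((ω₂ * x : ℝ) : ℂ)) *
          (Complex.exp (Complex.I * (((ω₁ - ω₂) * x : ℝ) : ℂ)) - 1 -
            Complex.I * (((ω₁ - ω₂) * x : ℝ) : ℂ)) +
        Complex.I * (((ω₁ - ω₂) * x : ℝ) : ℂ) *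
          (Complex.exp (Complex.I * ((ω₂ * x : ℝ) : ℂ)) - 1) := by
      unfold levyInt
      rw [Set.indicator_of_mem hx, Set.indicator_of_mem hx]
      have e1 : Complex.I * (ω₁ : ℂ) * (x : ℂ) =
          Complex.I * ((ω₂ * x : ℝ) : ℂ) + Complex.I * (((ω₁ - ω₂) * x : ℝ) : ℂ) := by
        push_cast; ring
      have e2 : Complex.I * (ω₂ : ℂ) * (x : ℂ) = Complex.I * ((ω₂ * x : ℝ) : ℂ) := by
        push_cast; ring
      rw [e1, e2, Complex.exp_add]
      push_cast; ring
    have hexp1 : ‖Complex.exp (Complex.I * ((ω₂ * x : ℝ) : ℂ))‖ = 1 := by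
      rw [mul_comm, Complex.norm_exp_ofReal_mul_I]
    have hIabs : ‖Complex.I * (((ω₁ - ω₂) * x : ℝ) : ℂ)‖ = |ω₁ - ω₂| * |x| := by
      rw [norm_mul, Complex.norm_I, one_mul, Complex.norm_real, Real.norm_eq_abs, abs_mul]
    have hδx1 : |ω₁ - ω₂| * |x| ≤ 1 :=
      mul_le_one₀ hδ (abs_nonneg x) hx1
    have na : ‖Complex.exp (Complex.I * ((ω₂ * x : ℝ) : ℂ)) *
          (Complex.exp (Complex.I * (((ω₁ - ω₂) * x : ℝ) : ℂ)) - 1 -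
            Complex.I * (((ω₁ - ω₂) * x : ℝ) : ℂ))‖ ≤ |ω₁ - ω₂| * x ^ 2 := by
      rw [norm_mul, hexp1, one_mul]
      have h1 : ‖Complex.I * (((ω₁ - ω₂) * x : ℝ) : ℂ)‖ ≤ 1 := by
        rw [hIabs]; exact hδx1
      have h2 := Complex.norm_exp_sub_one_sub_id_le h1
      calc ‖Complex.exp (Complex.I * (((ω₁ - ω₂) * x : ℝ) : ℂ)) - 1 -
            Complex.I * (((ω₁ - ω₂) * x : ℝ) : ℂ)‖
          ≤ ‖Complex.I * (((ω₁ - ω₂) * x : ℝ) : ℂ)‖ ^ 2 := h2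
        _ = (|ω₁ - ω₂| * |x|) ^ 2 := by rw [hIabs]
        _ ≤ |ω₁ - ω₂| * x ^ 2 := by
            nlinarith [mul_le_of_le_one_left (abs_nonneg (ω₁ - ω₂)) hδ,
              _root_.sq_abs x, sq_nonneg x, abs_nonneg (ω₁ - ω₂)]
    have nb : ‖Complex.I * (((ω₁ - ω₂) * x : ℝ) : ℂ) *
          (Complex.exp (Complex.I * ((ω₂ * x : ℝ) : ℂ)) - 1)‖ ≤
          |ω₁ - ω₂| * (x ^ 2 / 2 + (1 - Real.cos (ω₂ * x))) := by
      rw [norm_mul, hIabs]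
      have h1 := sqnorm_exp_I_sub_one (ω₂ * x)
      have h2 := two_mul_le_add_sq |x| ‖Complex.exp (Complex.I * ((ω₂ * x : ℝ) : ℂ)) - 1‖
      have h3 : 0 ≤ |ω₁ - ω₂| := abs_nonneg _
      nlinarith [norm_nonneg (Complex.exp (Complex.I * ((ω₂ * x : ℝ) : ℂ)) - 1),
        _root_.sq_abs x, abs_nonneg x]
    have hmin : min 1 (x ^ 2) = x ^ 2 := min_eq_right (sq_le_one_of_mem hx)
    calc ‖levyInt ω₁ x - levyInt ω₂ x‖
        ≤ |ω₁ - ω₂| * x ^ 2 + |ω₁ - ω₂| * (x ^ 2 / 2 + (1 - Real.cos (ω₂ * x))) := by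
          rw [hid]; exact (norm_add_le _ _).trans (add_le_add na nb)
      _ ≤ 2 * |ω₁ - ω₂| * (min 1 (x ^ 2) + (1 - Real.cos (ω₂ * x))) +
          2 * |ω₁ - ω₂| ^ ε * Set.indicator {y : ℝ | 1 < |y|} (fun y => |y| ^ ε) x := by
          rw [hmin]
          have h4 : 0 ≤ 2 * |ω₁ - ω₂| ^ ε :=
            mul_nonneg (by norm_num) (Real.rpow_nonneg (abs_nonneg _) _)
          nlinarith [abs_nonneg (ω₁ - ω₂), sq_nonneg x, hind0 x,
            mul_nonneg h4 (hind0 x), mul_nonneg (abs_nonneg (ω₁ - ω₂)) hc0,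
            mul_nonneg (abs_nonneg (ω₁ - ω₂)) (sq_nonneg x)]
  · have hx1 : 1 < |x| := by
      rw [Set.mem_Icc, not_and_or, not_le, not_le] at hx
      rcases hx with h | h
      · calc (1 : ℝ) < -x := by linarith
          _ ≤ |x| := neg_le_abs x
      · calc (1 : ℝ) < x := h
          _ ≤ |x| := le_abs_self x
    have hid : levyInt ω₁ x - levyInt ω₂ x =
        Complex.exp (Complex.I * ((ω₂ * x : ℝ) : ℂ)) *
          (Complex.exp (Complex.I * (((ω₁ - ω₂) * x : ℝ) : ℂ)) - 1) := by
      unfold levyInt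
      have hxmem : x ∉ Set.Icc (-1 : ℝ) 1 := hx
      rw [Set.indicator_of_notMem hxmem, Set.indicator_of_notMem hxmem]
      have e1 : Complex.I * (ω₁ : ℂ) * (x : ℂ) =
          Complex.I * ((ω₂ * x : ℝ) : ℂ) + Complex.I * (((ω₁ - ω₂) * x : ℝ) : ℂ) := by
        push_cast; ring
      have e2 : Complex.I * (ω₂ : ℂ) * (x : ℂ) = Complex.I * ((ω₂ * x : ℝ) : ℂ) := by
        push_cast; ring
      rw [e1, e2, Complex.exp_add]
      ring
    have hindx : Set.indicator {y : ℝ | 1 < |y|} (fun y => |y| ^ ε) x = |x| ^ ε :=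
      Set.indicator_of_mem (show x ∈ {y : ℝ | 1 < |y|} from hx1) _
    have hnorm : ‖levyInt ω₁ x - levyInt ω₂ x‖ =
        ‖Complex.exp (Complex.I * (((ω₁ - ω₂) * x : ℝ) : ℂ)) - 1‖ := by
      rw [hid, norm_mul, mul_comm Complex.I,
        Complex.norm_exp_ofReal_mul_I, one_mul]
    have hkey : ‖Complex.exp (Complex.I * (((ω₁ - ω₂) * x : ℝ) : ℂ)) - 1‖ ≤
        2 * |ω₁ - ω₂| ^ ε * |x| ^ ε := by
      rcases eq_or_ne (ω₁ - ω₂) 0 with h0 | h0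
      · simp [h0, Complex.exp_zero]
        positivity
      · have ht0 : 0 < |ω₁ - ω₂| * |x| :=
          mul_pos (abs_pos.mpr h0) (lt_trans one_pos hx1)
        have hmul : (|ω₁ - ω₂| * |x|) ^ ε = |ω₁ - ω₂| ^ ε * |x| ^ ε :=
          Real.mul_rpow (abs_nonneg _) (abs_nonneg _)
        rcases le_or_gt (|ω₁ - ω₂| * |x|) 1 with h1 | h1
        · calc ‖Complex.exp (Complex.I * (((ω₁ - ω₂) * x : ℝ) : ℂ)) - 1‖
              ≤ |(ω₁ - ω₂) * x| := norm_exp_I_sub_one_le_abs _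
            _ = |ω₁ - ω₂| * |x| := abs_mul _ _
            _ ≤ (|ω₁ - ω₂| * |x|) ^ ε :=
                self_le_rpow_of_le_one (le_of_lt ht0) h1 hε0 hε1
            _ = |ω₁ - ω₂| ^ ε * |x| ^ ε := hmul
            _ ≤ 2 * |ω₁ - ω₂| ^ ε * |x| ^ ε := by
                nlinarith [Real.rpow_nonneg (abs_nonneg (ω₁ - ω₂)) ε,
                  Real.rpow_nonneg (abs_nonneg x) ε,
                  mul_nonneg (Real.rpow_nonneg (abs_nonneg (ω₁ - ω₂)) ε)
                    (Real.rpow_nonneg (abs_nonneg x) ε)]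
        · have h2 : (1 : ℝ) ≤ (|ω₁ - ω₂| * |x|) ^ ε := by
            calc (1 : ℝ) = (1 : ℝ) ^ ε := (Real.one_rpow ε).symm
              _ ≤ (|ω₁ - ω₂| * |x|) ^ ε :=
                  Real.rpow_le_rpow zero_le_one h1.le hε0.le
          calc ‖Complex.exp (Complex.I * (((ω₁ - ω₂) * x : ℝ) : ℂ)) - 1‖
              ≤ 2 := norm_exp_I_sub_one_le_two _
            _ ≤ 2 * ((|ω₁ - ω₂| * |x|) ^ ε) := by linarith
            _ = 2 * |ω₁ - ω₂| ^ ε * |x| ^ ε := by rw [hmul]; ring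
    rw [hnorm, hindx]
    have h5 : 0 ≤ 2 * |ω₁ - ω₂| * (min 1 (x ^ 2) + (1 - Real.cos (ω₂ * x))) := by
      apply mul_nonneg (by positivity)
      linarith
    linarith [hkey]

/-! ### Main theorem -/

set_option maxHeartbeats 2000000

/-- If moreover `∫_{|x|>1} |x|^ε ν(dx) < ∞` for some `ε ∈ (0, 1)`, then for
every `q > 0` the function `g(ω) = q/(q − ψ(ω))` satisfies a global Hölder
condition on `ℝ`. -/
theorem levyExponent_exponential_char_fn_holder
    (μdrift σ : ℝ) (hσ : 0 ≤ σ) (ν : Measure ℝ)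
    (hν0 : ν {0} = 0)
    (hν : ∫⁻ x : ℝ, ENNReal.ofReal (min 1 (x ^ 2)) ∂ν < ⊤)
    (hνε : ∃ ε ∈ Set.Ioo (0 : ℝ) 1,
      ∫⁻ x : ℝ in {x : ℝ | 1 < |x|}, ENNReal.ofReal (|x| ^ ε) ∂ν < ⊤)
    (q : ℝ) (hq : 0 < q) :
    ∃ C > (0 : ℝ), ∃ γ ∈ Set.Ioc (0 : ℝ) 1, ∀ ω₁ ω₂ : ℝ,
      ‖(q : ℂ) / ((q : ℂ) - levyExponent μdrift σ ν ω₁) -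
        (q : ℂ) / ((q : ℂ) - levyExponent μdrift σ ν ω₂)‖ ≤ C * |ω₁ - ω₂| ^ γ := by
  obtain ⟨ε, ⟨hε0, hε1⟩, hBfin⟩ := hνε
  set ψ := levyExponent μdrift σ ν with hψdef
  -- integrability of `min 1 x²`
  have hmin_meas : Measurable fun x : ℝ => min 1 (x ^ 2) :=
    measurable_const.min (measurable_id.pow_const 2)
  have hmin_nonneg : ∀ x : ℝ, 0 ≤ min 1 (x ^ 2) := fun x => le_min zero_le_one (sq_nonneg x)
  have hImin : Integrable (fun x : ℝ => min 1 (x ^ 2)) ν := by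
    refine ⟨hmin_meas.aestronglyMeasurable, ?_⟩
    rw [hasFiniteIntegral_iff_ofReal (Filter.Eventually.of_forall hmin_nonneg)]
    exact hν
  set M := ∫ x, min 1 (x ^ 2) ∂ν with hMdef
  have hM0 : 0 ≤ M := integral_nonneg hmin_nonneg
  -- integrability of the integrand
  have hIf : ∀ ω : ℝ, Integrable (levyInt ω) ν := by
    intro ω
    refine (hImin.const_mul (3 * ω ^ 2 + 2)).mono'
      (levyInt_measurable ω).aestronglyMeasurable ?_
    exact Filter.Eventually.of_forall fun x => levyInt_norm_le ω x
  -- integrability of `1 - cos(ωx)`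
  have hIcos : ∀ ω : ℝ, Integrable (fun x : ℝ => 1 - Real.cos (ω * x)) ν := by
    intro ω
    refine (hImin.const_mul (ω ^ 2 / 2 + 2)).mono'
      ((measurable_const.sub ((Real.continuous_cos.measurable).comp
        (measurable_const.mul measurable_id))).aestronglyMeasurable) ?_
    refine Filter.Eventually.of_forall fun x => ?_
    rw [Real.norm_eq_abs, _root_.abs_of_nonneg (one_sub_cos_nonneg _)]
    exact one_sub_cos_le ω x
  set R : ℝ → ℝ := fun ω => ∫ x, (1 - Real.cos (ω * x)) ∂ν with hRdef
  have hR0 : ∀ ω, 0 ≤ R ω := fun ω => integral_nonneg fun x => one_sub_cos_nonneg _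
  -- the big-jump weight
  set φ : ℝ → ℝ := Set.indicator {y : ℝ | 1 < |y|} (fun y => |y| ^ ε) with hφdef
  have hset : MeasurableSet {y : ℝ | 1 < |y|} :=
    measurableSet_lt measurable_const measurable_abs
  have hφmeas : Measurable φ := by
    apply Measurable.indicator _ hset
    exact ((Real.continuous_rpow_const hε0.le).comp _root_.continuous_abs).measurable
  have hφnonneg : ∀ x, 0 ≤ φ x := by
    intro x
    apply Set.indicator_nonneg
    intro y _
    positivity
  have hIφ : Integrable φ ν := by
    refine ⟨hφmeas.aestronglyMeasurable, ?_⟩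
    rw [hasFiniteIntegral_iff_ofReal (Filter.Eventually.of_forall hφnonneg)]
    have : ∫⁻ x, ENNReal.ofReal (φ x) ∂ν =
        ∫⁻ x in {y : ℝ | 1 < |y|}, ENNReal.ofReal (|x| ^ ε) ∂ν := by
      rw [← lintegral_indicator hset]
      congr 1
      funext x
      by_cases hx : x ∈ {y : ℝ | 1 < |y|}
      · rw [hφdef]; simp [Set.indicator_of_mem hx]
      · rw [hφdef]; simp [Set.indicator_of_notMem hx]
    rw [this]
    exact hBfin
  set B := ∫ x, φ x ∂ν with hBdef
  have hB0 : 0 ≤ B := integral_nonneg hφnonneg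
  -- real part of the denominator
  have hre : ∀ ω : ℝ, ((q : ℂ) - ψ ω).re = q + σ ^ 2 * ω ^ 2 / 2 + R ω := by
    intro ω
    have h1 : (∫ x, levyInt ω x ∂ν).re = ∫ x, (levyInt ω x).re ∂ν := by
      have := integral_re (𝕜 := ℂ) (hIf ω) (μ := ν)
      simpa using this.symm
    have h2 : ∫ x, (levyInt ω x).re ∂ν = -(R ω) := by
      rw [hRdef, ← integral_neg]
      congr 1
      funext x
      rw [levyInt_re]
      ring
    rw [hψdef, levyExponent_eq]
    rw [Complex.sub_re, Complex.add_re, Complex.sub_re, h1, h2]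
    have h3 : (Complex.I * (μdrift : ℂ) * (ω : ℂ)).re = 0 := by simp
    have h4 : ((1 / 2 : ℂ) * (σ : ℂ) ^ 2 * (ω : ℂ) ^ 2).re = σ ^ 2 * ω ^ 2 / 2 := by
      have : ((1 / 2 : ℂ) * (σ : ℂ) ^ 2 * (ω : ℂ) ^ 2) = (((σ ^ 2 * ω ^ 2 / 2 : ℝ)) : ℂ) := by
        push_cast; ring
      rw [this, Complex.ofReal_re]
    rw [h3, h4, Complex.ofReal_re]
    ring
  have hD : ∀ ω : ℝ, q + σ ^ 2 * ω ^ 2 / 2 + R ω ≤ ‖(q : ℂ) - ψ ω‖ := by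
    intro ω
    rw [← hre ω]
    exact Complex.re_le_norm _
  have hDq : ∀ ω : ℝ, q ≤ ‖(q : ℂ) - ψ ω‖ := by
    intro ω
    refine le_trans ?_ (hD ω)
    nlinarith [hR0 ω, sq_nonneg (σ * ω), sq_nonneg σ, sq_nonneg ω, mul_pos hq hq]
  have hne : ∀ ω : ℝ, (q : ℂ) - ψ ω ≠ 0 := by
    intro ω h
    have := hDq ω
    rw [h, norm_zero] at this
    linarith
  -- the constant
  set c : ℝ := σ ^ 2 / (2 * q) with hcdef
  have hc0 : 0 ≤ c := by positivity
  set C : ℝ := |μdrift| / q + (c + 1) + 2 * (M / q + 1) + 2 * B / q + 2 with hCdef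
  have hCterms : 0 ≤ |μdrift| / q ∧ 0 ≤ M / q ∧ 0 ≤ B / q := by
    refine ⟨by positivity, ?_, ?_⟩
    · exact div_nonneg hM0 hq.le
    · exact div_nonneg hB0 hq.le
  have hC2 : 2 ≤ C := by
    rw [hCdef]
    have h1 := hCterms.1
    have h2 := hCterms.2.1
    have h3 := hCterms.2.2
    have h4 : 0 ≤ 2 * B / q := by
      rw [mul_div_assoc]
      linarith
    linarith [hc0]
  have hC0 : 0 < C := by linarith
  refine ⟨C, hC0, ε, ⟨hε0, hε1.le⟩, ?_⟩
  intro ω₁ ω₂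
  set d₁ := ‖(q : ℂ) - ψ ω₁‖ with hd₁def
  set d₂ := ‖(q : ℂ) - ψ ω₂‖ with hd₂def
  have hd₁0 : 0 < d₁ := lt_of_lt_of_le hq (hDq ω₁)
  have hd₂0 : 0 < d₂ := lt_of_lt_of_le hq (hDq ω₂)
  rcases le_or_gt |ω₁ - ω₂| 1 with hδ | hδ
  · -- small increment case
    set δ := ω₁ - ω₂ with hδdef
    set e := |δ| ^ ε with hedef
    have he0 : 0 ≤ e := Real.rpow_nonneg (abs_nonneg _) _
    have he : |δ| ≤ e := self_le_rpow_of_le_one (abs_nonneg δ) hδ hε0 hε1.le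
    have hq2 : q ^ 2 ≤ d₁ * d₂ := by
      calc q ^ 2 = q * q := sq q
        _ ≤ d₁ * d₂ := mul_le_mul (hDq ω₁) (hDq ω₂) hq.le hd₁0.le
    -- the difference of exponents
    have hdec : ψ ω₁ - ψ ω₂ =
        (Complex.I * (μdrift : ℂ) * ((δ : ℝ) : ℂ) -
          (1 / 2 : ℂ) * (σ : ℂ) ^ 2 * ((ω₁ : ℂ) ^ 2 - (ω₂ : ℂ) ^ 2)) +
        ∫ x, (levyInt ω₁ x - levyInt ω₂ x) ∂ν := by
      rw [integral_sub (hIf ω₁) (hIf ω₂), hψdef, levyExponent_eq, levyExponent_eq, hδdef]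
      push_cast
      ring
    -- bound the integral term
    have hint : ‖∫ x, (levyInt ω₁ x - levyInt ω₂ x) ∂ν‖ ≤
        2 * |δ| * (M + R ω₂) + 2 * e * B := by
      have hIa : Integrable (fun x : ℝ =>
          2 * |δ| * (min 1 (x ^ 2) + (1 - Real.cos (ω₂ * x)))) ν :=
        (hImin.add (hIcos ω₂)).const_mul _
      have hIb : Integrable (fun x : ℝ => 2 * e * φ x) ν := hIφ.const_mul _
      calc ‖∫ x, (levyInt ω₁ x - levyInt ω₂ x) ∂ν‖
          ≤ ∫ x, ‖levyInt ω₁ x - levyInt ω₂ x‖ ∂ν := norm_integral_le_integral_norm _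
        _ ≤ ∫ x, (2 * |δ| * (min 1 (x ^ 2) + (1 - Real.cos (ω₂ * x))) + 2 * e * φ x) ∂ν := by
            refine integral_mono ((hIf ω₁).sub (hIf ω₂)).norm (hIa.add hIb) ?_
            intro x
            exact levyInt_diff_norm_le hε0 hε1.le ω₁ ω₂ x hδ
        _ = 2 * |δ| * (M + R ω₂) + 2 * e * B := by
            rw [integral_add hIa hIb, integral_const_mul, integral_const_mul,
              integral_add hImin (hIcos ω₂), hMdef, hBdef]
    -- bound the deterministic term
    have hdet : ‖Complex.I * (μdrift : ℂ) * ((δ : ℝ) : ℂ) -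
          (1 / 2 : ℂ) * (σ : ℂ) ^ 2 * ((ω₁ : ℂ) ^ 2 - (ω₂ : ℂ) ^ 2)‖ ≤
        |μdrift| * |δ| + σ ^ 2 * (|ω₁| + |ω₂|) / 2 * |δ| := by
      have h1 : ‖Complex.I * (μdrift : ℂ) * ((δ : ℝ) : ℂ)‖ = |μdrift| * |δ| := by
        rw [norm_mul, norm_mul, Complex.norm_I, one_mul,
          Complex.norm_real, Complex.norm_real, Real.norm_eq_abs, Real.norm_eq_abs]
      have h2 : ‖(1 / 2 : ℂ) * (σ : ℂ) ^ 2 * ((ω₁ : ℂ) ^ 2 - (ω₂ : ℂ) ^ 2)‖ ≤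
          σ ^ 2 * (|ω₁| + |ω₂|) / 2 * |δ| := by
        have heq : (1 / 2 : ℂ) * (σ : ℂ) ^ 2 * ((ω₁ : ℂ) ^ 2 - (ω₂ : ℂ) ^ 2) =
            (((σ ^ 2 * ((ω₁ + ω₂) * δ) / 2 : ℝ)) : ℂ) := by
          rw [hδdef]; push_cast; ring
        rw [heq, Complex.norm_real, Real.norm_eq_abs]
        rw [abs_div, abs_mul, abs_mul]
        have hσ2 : |σ ^ 2| = σ ^ 2 := abs_of_nonneg (sq_nonneg σ)
        have hω : |ω₁ + ω₂| ≤ |ω₁| + |ω₂| := abs_add_le _ _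
        rw [hσ2]
        have h2' : |(2 : ℝ)| = 2 := by norm_num
        rw [h2']
        rw [div_le_iff₀ (by norm_num : (0:ℝ) < 2)]
        have : σ ^ 2 * (|ω₁ + ω₂| * |δ|) ≤ σ ^ 2 * ((|ω₁| + |ω₂|) * |δ|) := by
          apply mul_le_mul_of_nonneg_left _ (sq_nonneg σ)
          exact mul_le_mul_of_nonneg_right hω (abs_nonneg δ)
        nlinarith [sq_nonneg σ, abs_nonneg δ, abs_nonneg (ω₁ + ω₂)]
      calc ‖Complex.I * (μdrift : ℂ) * ((δ : ℝ) : ℂ) -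
            (1 / 2 : ℂ) * (σ : ℂ) ^ 2 * ((ω₁ : ℂ) ^ 2 - (ω₂ : ℂ) ^ 2)‖
          ≤ ‖Complex.I * (μdrift : ℂ) * ((δ : ℝ) : ℂ)‖ +
            ‖(1 / 2 : ℂ) * (σ : ℂ) ^ 2 * ((ω₁ : ℂ) ^ 2 - (ω₂ : ℂ) ^ 2)‖ := norm_sub_le _ _
        _ ≤ |μdrift| * |δ| + σ ^ 2 * (|ω₁| + |ω₂|) / 2 * |δ| := by
            rw [h1]; linarith
    have hψd : ‖ψ ω₁ - ψ ω₂‖ ≤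
        |μdrift| * |δ| + σ ^ 2 * (|ω₁| + |ω₂|) / 2 * |δ| + (2 * |δ| * (M + R ω₂) + 2 * e * B) := by
      rw [hdec]
      exact (norm_add_le _ _).trans (add_le_add hdet hint)
    -- AM–GM bound : σ²|w| ≤ (c+1) d  when  q ≤ d and σ²w²/2 ≤ d
    have amgm : ∀ (w d : ℝ), q ≤ d → σ ^ 2 * w ^ 2 / 2 ≤ d → σ ^ 2 * |w| ≤ (c + 1) * d := by
      intro w d hqd hwd
      have hcq : c * (2 * q) = σ ^ 2 := by rw [hcdef]; field_simp
      have hcd : c * q ≤ c * d := mul_le_mul_of_nonneg_left hqd hc0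
      nlinarith [two_mul_le_add_sq σ (σ * |w|), _root_.sq_abs w,
        mul_nonneg hσ (abs_nonneg w), sq_nonneg σ]
    have hσω₁ : σ ^ 2 * |ω₁| ≤ (c + 1) * d₁ := by
      apply amgm ω₁ d₁ (hDq ω₁)
      have := hD ω₁
      have := hR0 ω₁
      linarith
    have hσω₂ : σ ^ 2 * |ω₂| ≤ (c + 1) * d₂ := by
      apply amgm ω₂ d₂ (hDq ω₂)
      have := hD ω₂
      have := hR0 ω₂
      linarith
    have hR₂d : R ω₂ ≤ d₂ := by
      have := hD ω₂
      nlinarith [sq_nonneg (σ * ω₂), sq_nonneg σ, sq_nonneg ω₂]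
    -- the norm identity
    have hkey : (q : ℂ) / ((q : ℂ) - ψ ω₁) - (q : ℂ) / ((q : ℂ) - ψ ω₂) =
        (q : ℂ) * (ψ ω₁ - ψ ω₂) / (((q : ℂ) - ψ ω₁) * ((q : ℂ) - ψ ω₂)) := by
      have h₁ := hne ω₁
      have h₂ := hne ω₂
      field_simp
      ring
    have hgnorm : ‖(q : ℂ) / ((q : ℂ) - ψ ω₁) - (q : ℂ) / ((q : ℂ) - ψ ω₂)‖ =
        q * ‖ψ ω₁ - ψ ω₂‖ / (d₁ * d₂) := by
      rw [hkey, norm_div, norm_mul, norm_mul, Complex.norm_real, Real.norm_eq_abs,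
        abs_of_pos hq, hd₁def, hd₂def]
    rw [hgnorm, div_le_iff₀ (mul_pos hd₁0 hd₂0)]
    -- piecewise products
    have hp0 : |δ| * q ^ 2 ≤ e * (d₁ * d₂) := mul_le_mul he hq2 (sq_nonneg q) he0
    have hpe : e * q ^ 2 ≤ e * (d₁ * d₂) := mul_le_mul_of_nonneg_left hq2 he0
    have p1 : q * (|μdrift| * |δ|) ≤ |μdrift| / q * (e * (d₁ * d₂)) := by
      have heq : q * (|μdrift| * |δ|) = |μdrift| / q * (|δ| * q ^ 2) := by
        field_simp
      rw [heq]
      exact mul_le_mul_of_nonneg_left hp0 (div_nonneg (abs_nonneg _) hq.le)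
    have p2 : q * (σ ^ 2 * (|ω₁| + |ω₂|) / 2 * |δ|) ≤ (c + 1) * (e * (d₁ * d₂)) := by
      have h1 : q * (σ ^ 2 * |ω₁|) ≤ (c + 1) * (d₁ * d₂) := by
        calc q * (σ ^ 2 * |ω₁|) ≤ q * ((c + 1) * d₁) :=
              mul_le_mul_of_nonneg_left hσω₁ hq.le
          _ = (c + 1) * (q * d₁) := by ring
          _ ≤ (c + 1) * (d₂ * d₁) := by
              apply mul_le_mul_of_nonneg_left _ (by linarith)
              exact mul_le_mul_of_nonneg_right (hDq ω₂) hd₁0.le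
          _ = (c + 1) * (d₁ * d₂) := by ring
      have h2 : q * (σ ^ 2 * |ω₂|) ≤ (c + 1) * (d₁ * d₂) := by
        calc q * (σ ^ 2 * |ω₂|) ≤ q * ((c + 1) * d₂) :=
              mul_le_mul_of_nonneg_left hσω₂ hq.le
          _ = (c + 1) * (q * d₂) := by ring
          _ ≤ (c + 1) * (d₁ * d₂) := by
              apply mul_le_mul_of_nonneg_left _ (by linarith)
              exact mul_le_mul_of_nonneg_right (hDq ω₁) hd₂0.le
      have h3 : q * (σ ^ 2 * (|ω₁| + |ω₂|) / 2 * |δ|) ≤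
          q * (σ ^ 2 * (|ω₁| + |ω₂|) / 2 * e) := by
        apply mul_le_mul_of_nonneg_left _ hq.le
        apply mul_le_mul_of_nonneg_left he
        positivity
      have h4 : q * (σ ^ 2 * (|ω₁| + |ω₂|) / 2 * e) =
          e * (q * (σ ^ 2 * |ω₁|) + q * (σ ^ 2 * |ω₂|)) / 2 := by ring
      have h5 := mul_le_mul_of_nonneg_left (add_le_add h1 h2) he0
      nlinarith [h3, h4, h5]
    have p3 : q * (2 * |δ| * (M + R ω₂)) ≤ 2 * (M / q + 1) * (e * (d₁ * d₂)) := by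
      have h6 : q * |δ| ≤ d₁ * e := mul_le_mul (hDq ω₁) he (abs_nonneg δ) hd₁0.le
      have h7 : q * |δ| * R ω₂ ≤ d₁ * e * d₂ :=
        mul_le_mul h6 hR₂d (hR0 ω₂) (mul_nonneg hd₁0.le he0)
      have h8 : M ≤ M / q * d₂ := by
        rw [div_mul_eq_mul_div, le_div_iff₀ hq]
        exact mul_le_mul_of_nonneg_left (hDq ω₂) hM0
      have h9 : 2 * (q * |δ|) * M ≤ 2 * (d₁ * e) * M := by
        have := mul_le_mul_of_nonneg_right h6 hM0
        nlinarith
      have h10 : 2 * (d₁ * e) * M ≤ 2 * (d₁ * e) * (M / q * d₂) :=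
        mul_le_mul_of_nonneg_left h8 (by
          have : (0:ℝ) ≤ d₁ * e := mul_nonneg hd₁0.le he0
          linarith)
      nlinarith [h7, h9, h10]
    have p4 : q * (2 * e * B) ≤ 2 * B / q * (e * (d₁ * d₂)) := by
      have hBq : (0:ℝ) ≤ 2 * (B / q) := by
        have := div_nonneg hB0 hq.le
        linarith
      have heq : q * (2 * e * B) = 2 * (B / q) * (e * q ^ 2) := by
        field_simp
      rw [heq]
      calc 2 * (B / q) * (e * q ^ 2) ≤ 2 * (B / q) * (e * (d₁ * d₂)) :=
            mul_le_mul_of_nonneg_left hpe hBq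
        _ = 2 * B / q * (e * (d₁ * d₂)) := by ring
    -- assemble
    have hchain := mul_le_mul_of_nonneg_left hψd hq.le
    have hde : (0:ℝ) ≤ e * (d₁ * d₂) := mul_nonneg he0 (mul_pos hd₁0 hd₂0).le
    rw [hCdef]
    linarith [p1, p2, p3, p4, hchain, hde]
  · -- large increment case : use boundedness
    have h1 : ‖(q : ℂ) / ((q : ℂ) - ψ ω₁)‖ ≤ 1 := by
      rw [norm_div, Complex.norm_real, Real.norm_eq_abs, abs_of_pos hq]
      rw [div_le_one hd₁0]
      exact hDq ω₁
    have h2 : ‖(q : ℂ) / ((q : ℂ) - ψ ω₂)‖ ≤ 1 := by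
      rw [norm_div, Complex.norm_real, Real.norm_eq_abs, abs_of_pos hq]
      rw [div_le_one hd₂0]
      exact hDq ω₂
    have h3 : (1 : ℝ) ≤ |ω₁ - ω₂| ^ ε := by
      calc (1 : ℝ) = (1 : ℝ) ^ ε := (Real.one_rpow ε).symm
        _ ≤ |ω₁ - ω₂| ^ ε := Real.rpow_le_rpow zero_le_one hδ.le hε0.le
    calc ‖(q : ℂ) / ((q : ℂ) - ψ ω₁) - (q : ℂ) / ((q : ℂ) - ψ ω₂)‖
        ≤ ‖(q : ℂ) / ((q : ℂ) - ψ ω₁)‖ + ‖(q : ℂ) / ((q : ℂ) - ψ ω₂)‖ := norm_sub_le _ _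
      _ ≤ 2 := by linarith
      _ ≤ C * |ω₁ - ω₂| ^ ε := by nlinarith
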